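/- Let 0 < a < 1, b a natural number with a·b ≥ 1, and N ≥ 1 a natural number. The supremum, over all f of the form f(x) = ∑_{n=0}^{N−1} a^{n/2}(c_n cos(bⁿπx) + d_n sin(bⁿπx)) with real coefficients satisfying ∑_{n=0}^{N−1} (c_n² + d_n²) ≤ 1, of the sup norm sup_{x∈[−1,1]} |f(x)| equals ((1 − a^N)/(1 − a))^{1/2}. Equivalently, ‖I_W P_𝒰^N‖² = (1 − a^N)/(1 − a). -/
import Mathlib


open Real

/-- For `0 < a < 1`, `b : ℕ` with `a * b ≥ 1` and `N ≥ 1`, the supremum of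
the sup norms over `[-1,1]` of the functions
`f(x) = ∑_{n=0}^{N-1} a^(n/2)(cₙ cos(bⁿπx) + dₙ sin(bⁿπx))` with coefficients satisfying
`∑_{n=0}^{N-1} (cₙ² + dₙ²) ≤ 1` equals `((1 - a^N)/(1 - a))^(1/2)`; that is,
`‖I_W P_𝒰^N‖² = (1 - a^N)/(1 - a)`. -/
theorem weierstrass_projection_norm_head
    (a : ℝ) (b : ℕ) (ha0 : 0 < a) (ha1 : a < 1) (hab : 1 ≤ a * b) (N : ℕ) (hN : 1 ≤ N) :
    sSup {y : ℝ | ∃ c d : ℕ → ℝ,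
        (∑ n ∈ Finset.range N, (c n ^ 2 + d n ^ 2)) ≤ 1 ∧
        y = ⨆ x : Set.Icc (-1 : ℝ) 1,
          |∑ n ∈ Finset.range N, a ^ ((n : ℝ) / 2) *
            (c n * Real.cos ((b : ℝ) ^ n * π * (x : ℝ)) +
              d n * Real.sin ((b : ℝ) ^ n * π * (x : ℝ)))|} =
      Real.sqrt ((1 - a ^ N) / (1 - a)) := by
  haveI : Nonempty (Set.Icc (-1 : ℝ) 1) :=
    (Set.nonempty_Icc.2 (by norm_num)).to_subtype
  set S : ℝ := ∑ n ∈ Finset.range N, a ^ n with hS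
  have hSpos : 0 < S := by
    refine Finset.sum_pos (fun n _ => pow_pos ha0 n) ?_
    exact Finset.nonempty_range_iff.2 (by omega)
  have hSeq : S = (1 - a ^ N) / (1 - a) := by
    rw [hS, geom_sum_eq (ne_of_lt ha1)]
    rw [div_eq_div_iff (by linarith) (by linarith)]
    ring
  have hsq : ∀ n : ℕ, a ^ ((n : ℝ) / 2) = Real.sqrt (a ^ n) := by
    intro n
    rw [Real.sqrt_eq_rpow, ← Real.rpow_natCast a n, ← Real.rpow_mul ha0.le]
    ring_nf
  -- the key bound: each element of the set is ≤ √S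
  have key : ∀ (c d : ℕ → ℝ), (∑ n ∈ Finset.range N, (c n ^ 2 + d n ^ 2)) ≤ 1 →
      ∀ x : ℝ,
      |∑ n ∈ Finset.range N, a ^ ((n : ℝ) / 2) *
            (c n * Real.cos ((b : ℝ) ^ n * π * x) +
              d n * Real.sin ((b : ℝ) ^ n * π * x))| ≤ Real.sqrt S := by
    intro c d hcd x
    have h1 : ∀ n ∈ Finset.range N,
        |a ^ ((n : ℝ) / 2) * (c n * Real.cos ((b : ℝ) ^ n * π * x) +
          d n * Real.sin ((b : ℝ) ^ n * π * x))| ≤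
          a ^ ((n : ℝ) / 2) * Real.sqrt (c n ^ 2 + d n ^ 2) := by
      intro n _
      rw [abs_mul, abs_of_nonneg (Real.rpow_nonneg ha0.le _)]
      refine mul_le_mul_of_nonneg_left ?_ (Real.rpow_nonneg ha0.le _)
      have hc := Real.cos_sq_add_sin_sq ((b : ℝ) ^ n * π * x)
      have : (c n * Real.cos ((b : ℝ) ^ n * π * x) +
          d n * Real.sin ((b : ℝ) ^ n * π * x)) ^ 2 ≤ c n ^ 2 + d n ^ 2 := by
        nlinarith [sq_nonneg (c n * Real.sin ((b : ℝ) ^ n * π * x) -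
          d n * Real.cos ((b : ℝ) ^ n * π * x))]
      calc _ = Real.sqrt ((c n * Real.cos ((b : ℝ) ^ n * π * x) +
          d n * Real.sin ((b : ℝ) ^ n * π * x)) ^ 2) := (Real.sqrt_sq_eq_abs _).symm
        _ ≤ _ := Real.sqrt_le_sqrt this
    calc |∑ n ∈ Finset.range N, a ^ ((n : ℝ) / 2) *
            (c n * Real.cos ((b : ℝ) ^ n * π * x) +
              d n * Real.sin ((b : ℝ) ^ n * π * x))|
        ≤ ∑ n ∈ Finset.range N, |a ^ ((n : ℝ) / 2) *
            (c n * Real.cos ((b : ℝ) ^ n * π * x) +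
              d n * Real.sin ((b : ℝ) ^ n * π * x))| :=
          Finset.abs_sum_le_sum_abs _ _
      _ ≤ ∑ n ∈ Finset.range N, a ^ ((n : ℝ) / 2) * Real.sqrt (c n ^ 2 + d n ^ 2) :=
          Finset.sum_le_sum h1
      _ ≤ Real.sqrt S := by
          rw [Real.le_sqrt (Finset.sum_nonneg fun n _ =>
            mul_nonneg (Real.rpow_nonneg ha0.le _) (Real.sqrt_nonneg _)) hSpos.le]
          calc (∑ n ∈ Finset.range N, a ^ ((n : ℝ) / 2) *
                Real.sqrt (c n ^ 2 + d n ^ 2)) ^ 2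
              ≤ (∑ n ∈ Finset.range N, (a ^ ((n : ℝ) / 2)) ^ 2) *
                ∑ n ∈ Finset.range N, Real.sqrt (c n ^ 2 + d n ^ 2) ^ 2 :=
                Finset.sum_mul_sq_le_sq_mul_sq _ _ _
            _ ≤ S * 1 := by
                refine mul_le_mul ?_ ?_ (Finset.sum_nonneg fun n _ => sq_nonneg _)
                  hSpos.le
                · apply le_of_eq
                  refine Finset.sum_congr rfl fun n _ => ?_
                  rw [hsq n, Real.sq_sqrt (pow_nonneg ha0.le n)]
                · calc ∑ n ∈ Finset.range N, Real.sqrt (c n ^ 2 + d n ^ 2) ^ 2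
                      = ∑ n ∈ Finset.range N, (c n ^ 2 + d n ^ 2) := by
                        refine Finset.sum_congr rfl fun n _ => ?_
                        exact Real.sq_sqrt (by positivity)
                    _ ≤ 1 := hcd
            _ = S := mul_one S
  rw [← hSeq]
  apply le_antisymm
  · apply Real.sSup_le
    · rintro y ⟨c, d, hcd, rfl⟩
      exact ciSup_le fun x => key c d hcd x
    · exact Real.sqrt_nonneg _
  · -- membership of √S via the witness c n = a^(n/2)/√S, d = 0
    apply le_csSup
    · refine ⟨Real.sqrt S, ?_⟩
      rintro y ⟨c, d, hcd, rfl⟩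
      exact ciSup_le fun x => key c d hcd x
    · refine ⟨fun n => a ^ ((n : ℝ) / 2) / Real.sqrt S, fun _ => 0, ?_, ?_⟩
      · apply le_of_eq
        have : ∀ n ∈ Finset.range N,
            (a ^ ((n : ℝ) / 2) / Real.sqrt S) ^ 2 + (0 : ℝ) ^ 2 = a ^ n / S := by
          intro n _
          rw [div_pow, hsq n, Real.sq_sqrt (pow_nonneg ha0.le n),
            Real.sq_sqrt hSpos.le]
          ring
        rw [Finset.sum_congr rfl this, ← Finset.sum_div, ← hS, div_self hSpos.ne']
      · have hbdd : BddAbove (Set.range fun x : Set.Icc (-1 : ℝ) 1 =>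
            |∑ n ∈ Finset.range N, a ^ ((n : ℝ) / 2) *
              ((a ^ ((n : ℝ) / 2) / Real.sqrt S) * Real.cos ((b : ℝ) ^ n * π * (x : ℝ)) +
                (0 : ℝ) * Real.sin ((b : ℝ) ^ n * π * (x : ℝ)))|) := by
          refine ⟨Real.sqrt S, ?_⟩
          rintro y ⟨x, rfl⟩
          refine key _ _ ?_ x
          · apply le_of_eq
            have : ∀ n ∈ Finset.range N,
                (a ^ ((n : ℝ) / 2) / Real.sqrt S) ^ 2 + (0 : ℝ) ^ 2 = a ^ n / S := by
              intro n _
              rw [div_pow, hsq n, Real.sq_sqrt (pow_nonneg ha0.le n),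
                Real.sq_sqrt hSpos.le]
              ring
            rw [Finset.sum_congr rfl this, ← Finset.sum_div, ← hS, div_self hSpos.ne']
        apply le_antisymm
        · -- √S ≤ value at x = 0
          have h0 : (0 : ℝ) ∈ Set.Icc (-1 : ℝ) 1 := by norm_num
          refine le_trans ?_ (le_ciSup hbdd ⟨0, h0⟩)
          apply le_of_eq
          have : ∀ n ∈ Finset.range N,
              a ^ ((n : ℝ) / 2) *
                ((a ^ ((n : ℝ) / 2) / Real.sqrt S) * Real.cos ((b : ℝ) ^ n * π * (0 : ℝ)) +
                  (0 : ℝ) * Real.sin ((b : ℝ) ^ n * π * (0 : ℝ))) = a ^ n / Real.sqrt S := by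
            intro n _
            simp only [mul_zero, Real.cos_zero, Real.sin_zero, zero_mul, add_zero, mul_one]
            rw [hsq n, mul_div_assoc', Real.mul_self_sqrt (pow_nonneg ha0.le n)]
          rw [show ((⟨0, h0⟩ : Set.Icc (-1 : ℝ) 1) : ℝ) = 0 from rfl]
          rw [Finset.sum_congr rfl this, ← Finset.sum_div, ← hS,
            abs_of_nonneg (by positivity), Real.div_sqrt]
        · exact ciSup_le fun x => by
            refine key _ _ ?_ x
            apply le_of_eq
            have : ∀ n ∈ Finset.range N,
                (a ^ ((n : ℝ) / 2) / Real.sqrt S) ^ 2 + (0 : ℝ) ^ 2 = a ^ n / S := by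
              intro n _
              rw [div_pow, hsq n, Real.sq_sqrt (pow_nonneg ha0.le n),
                Real.sq_sqrt hSpos.le]
              ring
            rw [Finset.sum_congr rfl this, ← Finset.sum_div, ← hS, div_self hSpos.ne']
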